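/- arXiv:2105.01803 — 2 statements merged into one kernel-verified Lean document; each statement's English description precedes it below -/
import Mathlib

section
/- Let I be a nonempty finite index set of frames of a single request category. Each frame i ∈ I has an arrival time a_i ≥ 0, a relative deadline d_i > 0, and a completion time c_i (the time at which the job instance containing frame i finishes). Set the time window length W = (1/2)·min_{i ∈ I} d_i, and let the batching time of frame i be b_i = W·(⌊a_i/W⌋ + 1). If every job instance meets its deadline, i.e., c_i ≤ b_i + W for all i ∈ I, then every frame meets its own deadline, i.e., c_i ≤ a_i + d_i for all i ∈ I. -/
/-- Single-category form of Theorem 1: with window length `W` equal to half the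
smallest relative deadline of the frames, if every job instance meets its
deadline (`c i ≤ b i + W`) then every frame meets its own deadline
(`c i ≤ a i + d i`). -/
theorem frames_schedulable_of_job_instances_schedulable
    {ι : Type*} (I : Finset ι) (hI : I.Nonempty)
    (a d c : ι → ℝ)
    (ha : ∀ i ∈ I, 0 ≤ a i) (hd : ∀ i ∈ I, 0 < d i)
    (W : ℝ) (hW : W = (1 / 2) * I.inf' hI d)
    (b : ι → ℝ) (hb : ∀ i ∈ I, b i = W * ((⌊a i / W⌋ : ℝ) + 1))
    (hjob : ∀ i ∈ I, c i ≤ b i + W) :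
    ∀ i ∈ I, c i ≤ a i + d i := by
  have hinf : 0 < I.inf' hI d := by
    obtain ⟨j, hj, hje⟩ := I.exists_mem_eq_inf' hI d
    rw [hje]; exact hd j hj
  have hWpos : 0 < W := by rw [hW]; linarith
  intro i hi
  have hmin : I.inf' hI d ≤ d i := Finset.inf'_le d hi
  have hfloor : W * (⌊a i / W⌋ : ℝ) ≤ a i := by
    have := Int.floor_le (a i / W)
    calc W * (⌊a i / W⌋ : ℝ) ≤ W * (a i / W) := by
          exact mul_le_mul_of_nonneg_left this hWpos.le
      _ = a i := by field_simp
  have hbi : b i ≤ a i + W := by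
    rw [hb i hi, mul_add, mul_one]; linarith
  have := hjob i hi
  have h2W : 2 * W ≤ d i := by rw [hW]; linarith
  linarith
end

section
/- Let Γ be a nonempty set of request categories, and for each g ∈ Γ let M_g be a nonempty finite set of requests of category g, where request m ∈ M_g has relative deadline d^g_m > 0. For each category g set the time window length W_g = (1/2)·min_{m ∈ M_g} d^g_m. Suppose each frame is described by a triple: its category g ∈ Γ, the request m ∈ M_g it belongs to, its arrival time a ≥ 0, and its completion time c; its batching time is b = W_g·(⌊a/W_g⌋ + 1). If for every frame the job instance containing it meets the job instance deadline, i.e., c ≤ b + W_g, then every frame of every request (g, m) satisfies c ≤ a + d^g_m, i.e., all requests are schedulable. -/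
/-- Theorem 1 of the paper in full generality: requests are partitioned into
categories `g : G`; each category `g` has a nonempty finite set of requests
`M g`, request `m` having relative deadline `d g m > 0`.  With per-category
window length `W g = (1/2) · min_{m ∈ M g} d g m`, if every frame's job
instance meets its deadline (`comp f ≤ b f + W (cat f)`) then every frame of
every request meets that request's deadline, i.e. all requests are schedulable. -/
theorem all_requests_schedulable_of_job_instances_schedulable
    {G : Type*} [Nonempty G] {R : Type*}
    (M : G → Finset R) (hM : ∀ g, (M g).Nonempty)
    (d : G → R → ℝ) (hd : ∀ g, ∀ m ∈ M g, 0 < d g m)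
    (W : G → ℝ) (hW : ∀ g, W g = (1 / 2) * (M g).inf' (hM g) (d g))
    {F : Type*} (cat : F → G) (req : F → R)
    (hreq : ∀ f, req f ∈ M (cat f))
    (arr comp : F → ℝ) (harr : ∀ f, 0 ≤ arr f)
    (b : F → ℝ)
    (hb : ∀ f, b f = W (cat f) * ((⌊arr f / W (cat f)⌋ : ℝ) + 1))
    (hjob : ∀ f, comp f ≤ b f + W (cat f)) :
    ∀ f, comp f ≤ arr f + d (cat f) (req f) := by
  intro f
  set g := cat f
  have hmin : (M g).inf' (hM g) (d g) ≤ d g (req f) := Finset.inf'_le _ (hreq f)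
  have hminpos : 0 < (M g).inf' (hM g) (d g) := by
    obtain ⟨m, hm, hme⟩ := Finset.exists_mem_eq_inf' (hM g) (d g)
    rw [hme]; exact hd g m hm
  have hWpos : 0 < W g := by rw [hW]; linarith
  have hfloor : (⌊arr f / W g⌋ : ℝ) ≤ arr f / W g := Int.floor_le _
  have hble : b f ≤ arr f + W g := by
    rw [hb]
    have : W g * ((⌊arr f / W g⌋ : ℝ) + 1) ≤ W g * (arr f / W g + 1) := by
      apply mul_le_mul_of_nonneg_left (by linarith) hWpos.le
    calc W g * ((⌊arr f / W g⌋ : ℝ) + 1) ≤ W g * (arr f / W g + 1) := this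
      _ = arr f + W g := by field_simp
  have h2W : 2 * W g ≤ d g (req f) := by rw [hW]; linarith
  have := hjob f
  linarith
end
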